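/- arXiv:math/0410213 — 3 statements merged into one kernel-verified Lean document; each statement's English description precedes it below -/
import Mathlib

section
/- Let d be a finite-dimensional Lie algebra with basis {∂_i} and structure constants c_{ij}^k, H = U(d), X = H* with left action ⟨∂x, h⟩ = -⟨x, ∂h⟩. Let x^j ∈ X be dual to ∂_j with respect to the PBW basis. Then ∂_i x^j ≡ -δ_i^j - Σ_{k<i} c_{ik}^j x^k modulo F_1 X, where F_1 X is the subspace of functionals vanishing on the degree-≤1 part of U(d). -/
/-!
A functional vanishes on `F¹H = k·1 ⊕ ι(𝔡)` as soon as it vanishes on `1` and on every `∂ₙ`,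
so it suffices to evaluate both sides there. In the PBW basis `1 = ∂^(0)` and `∂ₙ = ∂^(εₙ)`,
while for `n ≤ i` the ordered product `∂ₙ ∂ᵢ` is a multiple of the degree-two basis vector
`∂^(εₙ + εᵢ)`. Hence `⟨x^j, ∂ᵢ ∂ₙ⟩` vanishes for `n > i`, and for `n ≤ i` commuting
`∂ᵢ ∂ₙ = ∂ₙ ∂ᵢ + [∂ᵢ, ∂ₙ]` leaves exactly `c_{in}^j`; the case `n = i` contributes nothing
because `c_{ii}^j = 0`.
-/

open UniversalEnvelopingAlgebra

theorem List.prod_map_filter_of_eq_one {α M : Type*} [Monoid M] {l : List α} {p : α → Prop}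
    [DecidablePred p] {g : α → M} (h : ∀ x ∈ l, ¬p x → g x = 1) :
    ((l.filter p).map g).prod = (l.map g).prod := by
  induction l with
  | nil => rfl
  | cons x xs ih =>
    rw [List.forall_mem_cons] at h
    by_cases hx : p x
    · simp [hx, ih h.2]
    · simp [hx, ih h.2, h.1 hx]

theorem List.filter_finRange_mem {N : ℕ} (s : Finset (Fin N)) :
    (List.finRange N).filter (· ∈ s) = s.sort :=
  ((List.sortedLT_finRange N).pairwise.filter _).sortedLT.eq_of_mem_iff s.sortedLT_sort
    (by simp)

section OrderedMonomial

variable {M : Type*} [Monoid M] {N : ℕ} (f : Fin N → M)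

theorem List.prod_ofFn_pow_eq_prod_sort (I : Fin N → ℕ) (s : Finset (Fin N))
    (hs : ∀ t ∉ s, I t = 0) :
    (List.ofFn fun t => f t ^ I t).prod = (s.sort.map fun t => f t ^ I t).prod := by
  rw [List.ofFn_eq_map, ← List.filter_finRange_mem,
    List.prod_map_filter_of_eq_one fun t _ ht => by simp [hs t (by simpa using ht)]]

theorem List.prod_ofFn_pow_single (m : Fin N) :
    (List.ofFn fun t => f t ^ (Pi.single m 1 : Fin N → ℕ) t).prod = f m := by
  rw [List.prod_ofFn_pow_eq_prod_sort f _ {m} fun t ht => by simp_all]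
  simp

theorem List.prod_ofFn_pow_single_add_single {n i : Fin N} (h : n ≤ i) :
    (List.ofFn fun t => f t ^ (Pi.single n 1 + Pi.single i 1 : Fin N → ℕ) t).prod
      = f n * f i := by
  rw [List.prod_ofFn_pow_eq_prod_sort f _ {n, i} fun t ht => by simp_all]
  rcases h.lt_or_eq with h | rfl
  · rw [Finset.sort_insert _ (by simpa using h.le) (by simpa using h.ne)]
    simp [h.ne, h.ne']
  · simp [sq]

end OrderedMonomial

section LieAlgebra

variable {R : Type*} [CommRing R] {L : Type*} [LieRing L] [LieAlgebra R L]

theorem UniversalEnvelopingAlgebra.ι_mul_ι (a b : L) :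
    ι R a * ι R b = ι R b * ι R a + ι R ⁅a, b⁆ := by
  let _ : LieRing (UniversalEnvelopingAlgebra R L) := LieRing.ofAssociativeRing
  rw [LieHom.map_lie, Ring.lie_def, add_sub_cancel]

theorem Module.Basis.lie_coeff_self_eq_zero {κ : Type*} [Fintype κ]
    (P : Module.Basis κ R L) {c : κ → κ → κ → R}
    (hc : ∀ i j, ⁅P i, P j⁆ = ∑ m, c i j m • P m) (i j : κ) : c i i j = 0 := by
  have h0 : ∑ m, c i i m • P m = 0 := by rw [← hc, lie_self]
  exact Fintype.linearIndependent_iff.mp P.linearIndependent _ h0 j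

theorem Module.Basis.mem_dualAnnihilator_span_one_union_range_ι {κ : Type*}
    (P : Module.Basis κ R L)
    {φ : Module.Dual R (UniversalEnvelopingAlgebra R L)} (h1 : φ 1 = 0)
    (hP : ∀ n, φ (ι R (P n)) = 0) :
    φ ∈ (Submodule.span R ({1} ∪ Set.range fun a => ι R a)).dualAnnihilator := by
  let _ : LieRing (UniversalEnvelopingAlgebra R L) := LieRing.ofAssociativeRing
  have hι : φ ∘ₗ (ι R : L →ₗ⁅R⁆ UniversalEnvelopingAlgebra R L).toLinearMap = 0 :=
    P.ext fun n => hP n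
  rw [Submodule.mem_dualAnnihilator]
  intro w hw
  refine (Submodule.span_le (p := LinearMap.ker φ)).mpr ?_ hw
  rintro _ (rfl | ⟨a, rfl⟩)
  · exact h1
  · exact LinearMap.congr_fun hι a

end LieAlgebra

section PBW

variable {k : Type*} [Field k] {d : Type*} [LieRing d] [LieAlgebra k d] {N : ℕ}

variable (k) in
def IsPBWBasis (P : Fin N → d)
    (B : Module.Basis (Fin N → ℕ) k (UniversalEnvelopingAlgebra k d)) : Prop :=
  ∀ I : Fin N → ℕ, B I = ((∏ i, Nat.factorial (I i) : ℕ) : k)⁻¹ •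
    (List.ofFn (fun i : Fin N => (ι k (P i)) ^ (I i))).prod

namespace IsPBWBasis

variable {P : Fin N → d} {B : Module.Basis (Fin N → ℕ) k (UniversalEnvelopingAlgebra k d)}

theorem prod_ofFn_pow_eq_smul (hB : IsPBWBasis k P B) (I : Fin N → ℕ) :
    (List.ofFn fun i => ι k (P i) ^ I i).prod =
      ((∏ i, Nat.factorial (I i) : ℕ) : k) • B I := by
  have hI : ((∏ i, Nat.factorial (I i) : ℕ) : k) ≠ 0 := fun h0 =>
    B.ne_zero I (by rw [hB I, h0, inv_zero, zero_smul])
  rw [hB I, smul_smul, mul_inv_cancel₀ hI, one_smul]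

theorem apply_zero (hB : IsPBWBasis k P B) : B 0 = 1 := by
  simp [hB 0]

theorem apply_single (hB : IsPBWBasis k P B) (m : Fin N) : B (Pi.single m 1) = ι k (P m) := by
  rw [hB, List.prod_ofFn_pow_single]
  simp [Pi.single_apply, apply_ite]

theorem coord_zero_one (hB : IsPBWBasis k P B) : B.coord 0 1 = 1 := by
  rw [← hB.apply_zero, B.coord_apply, B.repr_self_apply, if_pos rfl]

theorem coord_single_one (hB : IsPBWBasis k P B) (m : Fin N) :
    B.coord (Pi.single m 1) 1 = 0 := by
  rw [← hB.apply_zero, B.coord_apply, B.repr_self_apply, if_neg]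
  exact fun h => by simpa using congrFun h m

theorem coord_zero_ι (hB : IsPBWBasis k P B) (n : Fin N) : B.coord 0 (ι k (P n)) = 0 := by
  rw [← hB.apply_single, B.coord_apply, B.repr_self_apply, if_neg]
  exact fun h => by simpa using congrFun h n

theorem coord_single_ι (hB : IsPBWBasis k P B) (m n : Fin N) :
    B.coord (Pi.single m 1) (ι k (P n)) = if n = m then 1 else 0 := by
  rw [← hB.apply_single, B.coord_apply, B.repr_self_apply]
  by_cases h : n = m
  · simp [h]
  · rw [if_neg h, if_neg]
    exact fun hJ => by simpa [h] using congrFun hJ n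

theorem coord_single_ι_mul_ι_of_le (hB : IsPBWBasis k P B) {n i : Fin N} (h : n ≤ i)
    (j : Fin N) : B.coord (Pi.single j 1) (ι k (P n) * ι k (P i)) = 0 := by
  rw [← List.prod_ofFn_pow_single_add_single (fun t => ι k (P t)) h, hB.prod_ofFn_pow_eq_smul,
    map_smul, B.coord_apply, B.repr_self_apply, if_neg, smul_zero]
  intro hJ
  simpa [Finset.sum_add_distrib] using congrArg (fun J : Fin N → ℕ => ∑ t, J t) hJ

theorem coord_single_ι_mul_ι (hB : IsPBWBasis k P B) {c : Fin N → Fin N → Fin N → k}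
    (hc : ∀ i j, ⁅P i, P j⁆ = ∑ m, c i j m • P m) (i n j : Fin N) :
    B.coord (Pi.single j 1) (ι k (P i) * ι k (P n)) = if n ≤ i then c i n j else 0 := by
  rcases le_or_gt n i with h | h
  · rw [ι_mul_ι, map_add, hB.coord_single_ι_mul_ι_of_le h, zero_add, hc, if_pos h]
    simp only [map_sum, map_smul, hB.coord_single_ι, smul_eq_mul, mul_ite, mul_one, mul_zero,
      Finset.sum_ite_eq', Finset.mem_univ, if_true]
  · rw [hB.coord_single_ι_mul_ι_of_le h.le, if_neg h.not_ge]

end IsPBWBasis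

end PBW

theorem stmt4_general (k : Type*) [Field k]
    (d : Type*) [LieRing d] [LieAlgebra k d]
    (N : ℕ) (P : Module.Basis (Fin N) k d)
    (c : Fin N → Fin N → Fin N → k)
    (hc : ∀ i j : Fin N, ⁅P i, P j⁆ = ∑ m, c i j m • P m)
    (B : Module.Basis (Fin N → ℕ) k (UniversalEnvelopingAlgebra k d))
    (hB : ∀ I : Fin N → ℕ,
      B I = ((∏ i, Nat.factorial (I i) : ℕ) : k)⁻¹ •
        (List.ofFn (fun i : Fin N => (ι k (P i)) ^ (I i))).prod)
    (i j : Fin N) :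
    (-(B.coord (Pi.single j 1) ∘ₗ LinearMap.mulLeft k (ι k (P i))))
      - (-((if i = j then (1:k) else 0) • B.coord 0)
         - ∑ m ∈ Finset.univ.filter (fun m : Fin N => m < i),
            c i m j • B.coord (Pi.single m 1))
      ∈ (Submodule.span k ({(1 : UniversalEnvelopingAlgebra k d)}
          ∪ Set.range (fun a : d => ι k a))).dualAnnihilator := by
  have hPBW : IsPBWBasis k P B := hB
  apply P.mem_dualAnnihilator_span_one_union_range_ι
  · simp only [LinearMap.sub_apply, LinearMap.neg_apply, LinearMap.comp_apply,
      LinearMap.mulLeft_apply, LinearMap.smul_apply, LinearMap.sum_apply, mul_one,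
      hPBW.coord_zero_one, hPBW.coord_single_one, hPBW.coord_single_ι, smul_eq_mul, mul_zero,
      Finset.sum_const_zero, sub_zero, sub_self]
  · intro n
    simp only [LinearMap.sub_apply, LinearMap.neg_apply, LinearMap.comp_apply,
      LinearMap.mulLeft_apply, LinearMap.smul_apply, LinearMap.sum_apply, hPBW.coord_zero_ι,
      hPBW.coord_single_ι, hPBW.coord_single_ι_mul_ι hc, smul_eq_mul, mul_ite, mul_one, mul_zero,
      Finset.sum_ite_eq, Finset.mem_filter_univ]
    rcases lt_trichotomy n i with h | rfl | h
    · simp [h, h.le]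
    · simp [P.lie_coeff_self_eq_zero hc]
    · simp [h.asymm, not_le.mpr h]

/-- With `H = U(𝔡)`, PBW basis `∂^(I)` and dual elements `x^j ∈ X = H*`,
and the left action `⟨a·x, f⟩ = -⟨x, af⟩` of `𝔡` on `X`, one has
`∂ᵢ x^j ≡ -δᵢ^j - ∑_{m<i} c_{im}^j x^m` modulo `F₁X`, the annihilator of the
degree-`≤1` part of `U(𝔡)`.  Here `-δᵢ^j` denotes `-δᵢ^j` times the functional dual
to the basis element `1 = ∂^(0)`. -/
theorem stmt4 (k : Type*) [Field k] [CharZero k]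
    (d : Type*) [LieRing d] [LieAlgebra k d]
    (N : ℕ) (P : Module.Basis (Fin N) k d)
    (c : Fin N → Fin N → Fin N → k)
    (hc : ∀ i j : Fin N, ⁅P i, P j⁆ = ∑ m, c i j m • P m)
    (B : Module.Basis (Fin N → ℕ) k (UniversalEnvelopingAlgebra k d))
    (hB : ∀ I : Fin N → ℕ,
      B I = ((∏ i, Nat.factorial (I i) : ℕ) : k)⁻¹ •
        (List.ofFn (fun i : Fin N => (ι k (P i)) ^ (I i))).prod)
    (i j : Fin N) :
    (-(B.coord (Pi.single j 1) ∘ₗ LinearMap.mulLeft k (ι k (P i))))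
      - (-((if i = j then (1:k) else 0) • B.coord 0)
         - ∑ m ∈ Finset.univ.filter (fun m : Fin N => m < i),
            c i m j • B.coord (Pi.single m 1))
      ∈ (Submodule.span k ({(1 : UniversalEnvelopingAlgebra k d)}
          ∪ Set.range (fun a : d => ι k a))).dualAnnihilator :=
  stmt4_general k d N P c hc B hB i j
end

section
/- Let d be a finite-dimensional Lie algebra, H = U(d), and let W(d) = H ⊗ d with the pseudobracket [(f⊗a)*(g⊗b)] = (f⊗g)⊗_H(1⊗[a,b]) - (f⊗ga)⊗_H(1⊗b) + (fb⊗g)⊗_H(1⊗a). Then W(d) is a Lie pseudoalgebra: the pseudobracket satisfies skew-commutativity [b*a] = -(σ⊗_H id)[a*b] and the Jacobi identity [[a*b]*c] = [a*[b*c]] - ((σ⊗id)⊗_H id)[b*[a*c]]. -/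
open TensorProduct UniversalEnvelopingAlgebra

private theorem aux_map_sub₂ {k M N P : Type*} [CommSemiring k]
    [AddCommGroup M] [AddCommMonoid N] [AddCommGroup P]
    [Module k M] [Module k N] [Module k P]
    (f : M →ₗ[k] N →ₗ[k] P) (x y : M) (z : N) :
    f (x - y) z = f x z - f y z := by
  simp only [map_sub, LinearMap.sub_apply]

private theorem aux_Bl_sub (k : Type*) [Field k] (d : Type*) [LieRing d] [LieAlgebra k d]
    (Bl : (UniversalEnvelopingAlgebra k d ⊗[k] UniversalEnvelopingAlgebra k d) ⊗[k] d →ₗ[k]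
      UniversalEnvelopingAlgebra k d ⊗[k] d →ₗ[k]
        (UniversalEnvelopingAlgebra k d ⊗[k]
          (UniversalEnvelopingAlgebra k d ⊗[k] UniversalEnvelopingAlgebra k d)) ⊗[k] d)
    (x y : (UniversalEnvelopingAlgebra k d ⊗[k] UniversalEnvelopingAlgebra k d) ⊗[k] d)
    (z : UniversalEnvelopingAlgebra k d ⊗[k] d) :
    Bl (x - y) z = Bl x z - Bl y z :=
  aux_map_sub₂ (k := k)
    (M := (UniversalEnvelopingAlgebra k d ⊗[k] UniversalEnvelopingAlgebra k d) ⊗[k] d)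
    (N := UniversalEnvelopingAlgebra k d ⊗[k] d)
    (P := (UniversalEnvelopingAlgebra k d ⊗[k]
      (UniversalEnvelopingAlgebra k d ⊗[k] UniversalEnvelopingAlgebra k d)) ⊗[k] d)
    Bl x y z

set_option maxHeartbeats 16000000 in
set_option synthInstance.maxHeartbeats 4000000 in
/-- `W(𝔡) = H ⊗ 𝔡` (with `H = U(𝔡)`) together with the pseudobracket
`[(f⊗a)*(g⊗b)] = (f⊗g)⊗_H(1⊗[a,b]) - (f⊗ga)⊗_H(1⊗b) + (fb⊗g)⊗_H(1⊗a)` is a Lie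
pseudoalgebra.  Using the canonical identification `(H⊗H)⊗_H W(𝔡) ≅ (H⊗H)⊗𝔡` (and
similarly in three tensor factors), the pseudobracket is a bilinear map
`B : L → L → (H⊗H)⊗𝔡` with the displayed values on pure tensors; the left and right
extensions `Bl, Br` are determined by the coefficient formulas coming from `Δ⊗id` and
`id⊗Δ`; and the claim is skew-commutativity `[b*a] = -(σ⊗_H id)[a*b]` and the Jacobi
identity `[[a*b]*c] = [a*[b*c]] - ((σ⊗id)⊗_H id)[b*[a*c]]`. -/
theorem stmt15 (k : Type*) [Field k] [CharZero k]
    (d : Type*) [LieRing d] [LieAlgebra k d] [FiniteDimensional k d]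
    (Δ : UniversalEnvelopingAlgebra k d →ₗ[k]
      UniversalEnvelopingAlgebra k d ⊗[k] UniversalEnvelopingAlgebra k d)
    (hΔone : Δ 1 = 1)
    (hΔmul : ∀ x y, Δ (x * y) = Δ x * Δ y)
    (hΔι : ∀ a : d, Δ (ι k a) = (ι k a) ⊗ₜ[k] 1 + 1 ⊗ₜ[k] (ι k a)) :
    letI H := UniversalEnvelopingAlgebra k d
    letI σ : H ⊗[k] H →ₗ[k] H ⊗[k] H := (TensorProduct.comm k H H).toLinearMap
    letI σ₁₂ : H ⊗[k] (H ⊗[k] H) →ₗ[k] H ⊗[k] (H ⊗[k] H) :=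
      (TensorProduct.assoc k H H H).toLinearMap ∘ₗ
        (TensorProduct.map σ LinearMap.id) ∘ₗ
        (TensorProduct.assoc k H H H).symm.toLinearMap
    letI DL : (H ⊗[k] H) ⊗[k] d →ₗ[k] (H ⊗[k] (H ⊗[k] H)) ⊗[k] d :=
      TensorProduct.map
        ((TensorProduct.assoc k H H H).toLinearMap ∘ₗ TensorProduct.map Δ LinearMap.id)
        LinearMap.id
    letI DR : (H ⊗[k] H) ⊗[k] d →ₗ[k] (H ⊗[k] (H ⊗[k] H)) ⊗[k] d :=
      TensorProduct.map (TensorProduct.map LinearMap.id Δ) LinearMap.id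
    ∀ (B : (H ⊗[k] d) →ₗ[k] (H ⊗[k] d) →ₗ[k] (H ⊗[k] H) ⊗[k] d)
      (Bl : (H ⊗[k] H) ⊗[k] d →ₗ[k] (H ⊗[k] d) →ₗ[k] (H ⊗[k] (H ⊗[k] H)) ⊗[k] d)
      (Br : (H ⊗[k] d) →ₗ[k] (H ⊗[k] H) ⊗[k] d →ₗ[k] (H ⊗[k] (H ⊗[k] H)) ⊗[k] d),
      (∀ (f g : H) (a b : d),
        B (f ⊗ₜ[k] a) (g ⊗ₜ[k] b)
          = (f ⊗ₜ[k] g) ⊗ₜ[k] ⁅a, b⁆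
            - ((f ⊗ₜ[k] (g * ι k a)) ⊗ₜ[k] b)
            + (((f * ι k b) ⊗ₜ[k] g) ⊗ₜ[k] a)) →
      (∀ (F : H ⊗[k] H) (c : d) (y : H ⊗[k] d),
        Bl (F ⊗ₜ[k] c) y
          = TensorProduct.map
              (LinearMap.mulLeft k ((TensorProduct.assoc k H H H) (F ⊗ₜ[k] (1 : H))))
              LinearMap.id
              (DL (B ((1 : H) ⊗ₜ[k] c) y))) →
      (∀ (x : H ⊗[k] d) (F : H ⊗[k] H) (c : d),
        Br x (F ⊗ₜ[k] c)
          = TensorProduct.map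
              (LinearMap.mulLeft k ((1 : H) ⊗ₜ[k] F))
              LinearMap.id
              (DR (B x ((1 : H) ⊗ₜ[k] c)))) →
      ((∀ u v : H ⊗[k] d, B v u = -(TensorProduct.map σ LinearMap.id) (B u v)) ∧
       (∀ a b c : H ⊗[k] d,
         Bl (B a b) c
           = Br a (B b c) - (TensorProduct.map σ₁₂ LinearMap.id) (Br b (B a c)))) := by
  intro B Bl Br hB hBl hBr
  constructor
  · intro u v
    induction u using TensorProduct.induction_on with
    | zero => simp
    | tmul f a =>
      induction v using TensorProduct.induction_on with
      | zero => simp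
      | tmul g b =>
        rw [hB, hB]
        simp only [map_add, map_sub, map_neg, TensorProduct.map_tmul,
          TensorProduct.comm_tmul, LinearMap.id_coe, id_eq, LinearEquiv.coe_coe,
          ← lie_skew a b, TensorProduct.tmul_neg, TensorProduct.neg_tmul]
        abel
      | add x y hx hy => simp only [map_add, LinearMap.add_apply, hx, hy]; abel
    | add x y hx hy => simp only [map_add, LinearMap.add_apply, hx, hy]; abel
  · intro a b c
    induction a using TensorProduct.induction_on with
    | zero => simp
    | add x y hx hy => simp only [map_add, LinearMap.add_apply, hx, hy]; abel
    | tmul f x =>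
      induction b using TensorProduct.induction_on with
      | zero => simp
      | add x' y' hx hy => simp only [map_add, LinearMap.add_apply, hx, hy]; abel
      | tmul g y =>
        induction c using TensorProduct.induction_on with
        | zero => simp
        | add x' y' hx hy => simp only [map_add, LinearMap.add_apply, hx, hy]; abel
        | tmul h z =>
          simp only [hB]
          simp only [map_add, map_sub, LinearMap.add_apply, LinearMap.sub_apply,
            LinearMap.map_add₂, aux_Bl_sub k d Bl]
          simp only [hBl, hBr, hB]
          simp only [map_add, map_sub, map_smul, LinearMap.add_apply, LinearMap.sub_apply,
            LinearMap.smul_apply, TensorProduct.map_tmul, LinearMap.coe_comp, Function.comp_apply,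
            LinearEquiv.coe_coe, TensorProduct.assoc_tmul, TensorProduct.assoc_symm_tmul,
            TensorProduct.comm_tmul, LinearMap.id_coe, id_eq, hΔone, hΔι,
            Algebra.TensorProduct.one_def, LieHom.map_lie, Ring.lie_def,
            LinearMap.mulLeft_apply, Algebra.TensorProduct.tmul_mul_tmul,
            one_mul, mul_one, mul_sub, sub_mul, mul_add, add_mul, mul_assoc, lie_lie,
            TensorProduct.tmul_add, TensorProduct.tmul_sub, TensorProduct.add_tmul,
            TensorProduct.sub_tmul]
          simp only [← lie_skew y x, TensorProduct.tmul_neg]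
          abel
end

section
/- Let S_N ⊂ W_N be the Lie algebra of formal vector fields D = Σ f_i ∂/∂t^i with Σ ∂f_i/∂t^i = 0. Then S_N is a Lie subalgebra of W_N, and the normalizer of S_N in W_N equals S_N ⊕ kE, where E = Σ t^i ∂/∂t^i is the Euler vector field. -/
/-!
The partial derivatives `∂ᵢ` are `MvPowerSeries.pderiv`. A derivation shifting the filtration by a
bounded amount is determined by its values on the variables (it kills polynomials and is
continuous), so `A = ∑ⱼ A(tʲ) ∂ⱼ`. Applied to `⁅∂ᵢ, A⁆` this gives
`∂ᵢ (A g) = A (∂ᵢ g) + ∑ⱼ ∂ᵢ(A tʲ) ∂ⱼ g`, and summing over `i` the cross terms cancel: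
`Div ⁅A, B⁆ = A (Div B) - B (Div A)`, whence `S_N` is closed under brackets.
If `D` normalizes `S_N`, then since each `∂ᵢ ∈ S_N` we get `∂ᵢ (Div D) = -Div ⁅D, ∂ᵢ⁆ = 0`, so
`Div D = c` is constant and `D - (c / N) E ∈ S_N` because `Div E = N`. Conversely, if
`Div (D - c E) = 0` then `Div D` is constant, hence killed by every derivation `A`, and
`Div ⁅D, A⁆ = D (Div A)` vanishes for `A ∈ S_N`.
-/

/-- The filtration `F_p O_N` of `O_N = k[[t¹,…,t^N]]`. -/
def s18FO (k : Type*) [Field k] (N : ℕ) (p : ℤ) :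
    Submodule k (MvPowerSeries (Fin N) k) where
  carrier := {f | ∀ d : Fin N →₀ ℕ, (d.sum fun _ m => (m : ℤ)) ≤ p →
    MvPowerSeries.coeff d f = 0}
  add_mem' := by
    intro a b ha hb d hd
    simp [map_add, ha d hd, hb d hd]
  zero_mem' := by intro d hd; simp
  smul_mem' := by
    intro c a ha d hd
    simp [ha d hd]

/-- `D ∈ F_n W_N` iff `D(F_p O_N) ⊆ F_{p+n} O_N` for all `p`. -/
def s18FW (k : Type*) [Field k] (N : ℕ) (n : ℤ) :
    Set (Derivation k (MvPowerSeries (Fin N) k) (MvPowerSeries (Fin N) k)) :=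
  {D | ∀ (p : ℤ) (f : MvPowerSeries (Fin N) k), f ∈ s18FO k N p → D f ∈ s18FO k N (p + n)}

open MvPowerSeries Finsupp

namespace FormalVectorField

section Pderiv

variable {σ R : Type*} [CommRing R]

lemma eq_pderiv_of_forall_coeff {δ : σ → (MvPowerSeries σ R →ₗ[R] MvPowerSeries σ R)}
    (hδ : ∀ i f d, coeff d (δ i f) = (d i + 1) • coeff (d + single i 1) f) :
    δ = fun i => (pderiv R i).toLinearMap := by
  ext i f d
  simp [hδ, coeff_pderiv, nsmul_eq_mul, mul_comm]

lemma map_pderiv_X (D : Derivation R (MvPowerSeries σ R) (MvPowerSeries σ R)) (i j : σ) :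
    D (pderiv R i (X j)) = 0 := by
  classical
  rw [pderiv_X, Pi.single_apply]
  split_ifs
  · exact D.map_one_eq_zero
  · exact D.map_zero

variable [Fintype σ]

lemma sum_smul_pderiv_apply (f : σ → MvPowerSeries σ R) (g : MvPowerSeries σ R) :
    (∑ j, f j • pderiv R j) g = ∑ j, f j * pderiv R j g := by
  rw [← Derivation.coeFnAddMonoidHom_apply, map_sum, Finset.sum_apply]
  rfl

lemma sum_smul_pderiv_apply_X (D : Derivation R (MvPowerSeries σ R) (MvPowerSeries σ R))
    (i : σ) : (∑ j, D (X j) • pderiv R j) (X i) = D (X i) := by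
  classical
  simp [sum_smul_pderiv_apply, pderiv_X, Pi.single_apply]

end Pderiv

variable {k : Type*} [Field k] {N : ℕ}

local notation "𝒪" => MvPowerSeries (Fin N) k

local notation "𝒲" => Derivation k 𝒪 𝒪

lemma mem_s18FO_iff {p : ℤ} {f : 𝒪} :
    f ∈ s18FO k N p ↔ ∀ d, (d.degree : ℤ) ≤ p → coeff d f = 0 := by
  simp [s18FO, degree_eq_sum, sum_fintype]

lemma s18FO_antitone {p q : ℤ} (h : p ≤ q) : s18FO k N q ≤ s18FO k N p :=
  fun _ hf d hd => hf d (hd.trans h)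

lemma mul_mem_s18FO {p : ℤ} (f : 𝒪) {g : 𝒪} (hg : g ∈ s18FO k N p) :
    f * g ∈ s18FO k N p := by
  rw [mem_s18FO_iff] at hg ⊢
  intro d hd
  rw [coeff_mul]
  refine Finset.sum_eq_zero fun e he => ?_
  rw [Finset.HasAntidiagonal.mem_antidiagonal] at he
  have : e.2.degree ≤ d.degree := by rw [← he, map_add]; omega
  rw [hg e.2 (by omega), mul_zero]

lemma pderiv_mem_s18FO {p : ℤ} (i : Fin N) {f : 𝒪} (hf : f ∈ s18FO k N p) :
    pderiv k i f ∈ s18FO k N (p - 1) := by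
  rw [mem_s18FO_iff] at hf ⊢
  intro d hd
  rw [coeff_pderiv, hf _ (by simp [degree_single]; omega), zero_mul]

lemma sub_trunc'_mem_s18FO (n : ℕ) (f : 𝒪) :
    f - trunc' k (equivFunOnFinite.symm fun _ => n) f ∈ s18FO k N n := by
  rw [mem_s18FO_iff]
  intro d hd
  have : d ≤ equivFunOnFinite.symm fun _ => n := fun i => by
    have := le_degree i d
    rw [coe_equivFunOnFinite_symm]; omega
  rw [map_sub, MvPolynomial.coeff_coe, coeff_trunc', if_pos this, sub_self]

lemma s18FW_antitone {m m' : ℤ} (h : m' ≤ m) : s18FW k N m ⊆ s18FW k N m' :=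
  fun _ hD p f hf => s18FO_antitone (by omega) (hD p f hf)

lemma lie_mem_s18FW {m m' : ℤ} {A B : 𝒲} (hA : A ∈ s18FW k N m) (hB : B ∈ s18FW k N m') :
    ⁅A, B⁆ ∈ s18FW k N (m + m') := by
  intro p f hf
  rw [Derivation.commutator_apply]
  refine sub_mem ?_ ?_
  · exact s18FO_antitone (by omega) (hA _ _ (hB p f hf))
  · exact s18FO_antitone (by omega) (hB _ _ (hA p f hf))

variable (k N) in
def s18FWSubmodule (m : ℤ) : Submodule 𝒪 𝒲 where
  carrier := s18FW k N m
  add_mem' hA hB p f hf := add_mem (hA p f hf) (hB p f hf)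
  zero_mem' _ _ _ := zero_mem _
  smul_mem' g _ hD p f hf := mul_mem_s18FO g (hD p f hf)

lemma mem_s18FWSubmodule {m : ℤ} {D : 𝒲} : D ∈ s18FWSubmodule k N m ↔ D ∈ s18FW k N m :=
  Iff.rfl

lemma pderiv_mem_s18FW (i : Fin N) : pderiv k i ∈ s18FW k N (-1) :=
  fun _ _ hf => pderiv_mem_s18FO i hf

lemma eq_zero_of_map_X_eq_zero {m : ℤ} {D : 𝒲} (hD : D ∈ s18FW k N m)
    (hX : ∀ i, D (X i) = 0) : D = 0 := by
  have hpoly : ∀ P : MvPolynomial (Fin N) k, D P = 0 := fun P => by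
    induction P using MvPolynomial.induction_on with
    | C c => rw [MvPolynomial.coe_C, c_eq_algebraMap, D.map_algebraMap]
    | add P Q hP hQ => simp [hP, hQ]
    | mul_X P i hP => simp [hP, hX]
  -- `f` and its truncation agree up to total degree `n`; `D` sends their difference to
  -- order `> deg d`.
  ext f d
  set n := d.degree + m.natAbs
  have hrem := hD _ _ (sub_trunc'_mem_s18FO n f)
  rw [mem_s18FO_iff] at hrem
  have := hrem d (by omega)
  rwa [map_sub, hpoly, sub_zero] at this

lemma eq_sum_smul_pderiv {m : ℤ} {D : 𝒲} (hD : D ∈ s18FW k N m) :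
    D = ∑ j, D (X j) • pderiv k j := by
  have hD' : D ∈ s18FWSubmodule k N (min m (-1)) := s18FW_antitone (min_le_left _ _) hD
  have hsum : ∑ j, D (X j) • pderiv k j ∈ s18FWSubmodule k N (min m (-1)) :=
    sum_mem fun j _ =>
      Submodule.smul_mem _ _ (s18FW_antitone (min_le_right _ _) (pderiv_mem_s18FW j))
  refine sub_eq_zero.mp (eq_zero_of_map_X_eq_zero (sub_mem hD' hsum) fun i => ?_)
  rw [Derivation.sub_apply, sum_smul_pderiv_apply_X, sub_self]

lemma lie_pderiv_eq_sum {m : ℤ} {A : 𝒲} (hA : A ∈ s18FW k N m) (i : Fin N) :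
    ⁅pderiv k i, A⁆ = ∑ j, pderiv k i (A (X j)) • pderiv k j := by
  rw [eq_sum_smul_pderiv (lie_mem_s18FW (pderiv_mem_s18FW i) hA)]
  simp only [Derivation.commutator_apply, map_pderiv_X, sub_zero]

lemma pderiv_map_eq_map_pderiv_add_sum {m : ℤ} {A : 𝒲} (hA : A ∈ s18FW k N m) (i : Fin N)
    (g : 𝒪) :
    pderiv k i (A g) = A (pderiv k i g) + ∑ j, pderiv k i (A (X j)) * pderiv k j g := by
  rw [← sum_smul_pderiv_apply, ← lie_pderiv_eq_sum hA, Derivation.commutator_apply,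
    add_sub_cancel]

noncomputable def divergence (D : 𝒲) : 𝒪 := ∑ i, pderiv k i (D (X i))

lemma divergence_sub_smul (D E : 𝒲) (c : k) :
    divergence (D - c • E) = divergence D - c • divergence E := by
  simp [divergence, Finset.sum_sub_distrib, Finset.smul_sum]

lemma divergence_lie {m m' : ℤ} {A B : 𝒲} (hA : A ∈ s18FW k N m) (hB : B ∈ s18FW k N m') :
    divergence ⁅A, B⁆ = A (divergence B) - B (divergence A) := by
  have hswap : ∑ i, ∑ j, pderiv k i (B (X j)) * pderiv k j (A (X i)) =
      ∑ i, ∑ j, pderiv k i (A (X j)) * pderiv k j (B (X i)) := by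
    rw [Finset.sum_comm]
    simp_rw [mul_comm]
  have hterm (i : Fin N) : pderiv k i (⁅A, B⁆ (X i)) =
      (A (pderiv k i (B (X i))) + ∑ j, pderiv k i (A (X j)) * pderiv k j (B (X i))) -
        (B (pderiv k i (A (X i))) + ∑ j, pderiv k i (B (X j)) * pderiv k j (A (X i))) := by
    rw [Derivation.commutator_apply, map_sub, pderiv_map_eq_map_pderiv_add_sum hA i (B (X i)),
      pderiv_map_eq_map_pderiv_add_sum hB i (A (X i))]
  simp only [divergence, hterm, map_sum, Finset.sum_sub_distrib, Finset.sum_add_distrib, hswap]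
  abel

lemma divergence_pderiv (i : Fin N) : divergence (pderiv k i) = 0 :=
  Finset.sum_eq_zero fun j _ => map_pderiv_X (pderiv k j) i j

lemma divergence_eq_natCast {E : 𝒲} (hE : ∀ i, E (X i) = X i) : divergence E = N := by
  simp [divergence, hE]

lemma pderiv_divergence_eq_zero {m : ℤ} {D : 𝒲} (hD : D ∈ s18FW k N m) {i : Fin N}
    (h : divergence ⁅D, pderiv k i⁆ = 0) : pderiv k i (divergence D) = 0 := by
  rwa [divergence_lie hD (pderiv_mem_s18FW i), divergence_pderiv, D.map_zero, zero_sub,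
    neg_eq_zero] at h

lemma euler_apply_X {E : 𝒲}
    (hE : ∀ (f : 𝒪) (d : Fin N →₀ ℕ), coeff d (E f) = (d.sum fun _ m => m) • coeff d f)
    (i : Fin N) : E (X i) = X i := by
  classical
  ext d
  rw [hE, coeff_X]
  split_ifs with h
  · simp [h]
  · rw [smul_zero]

lemma euler_mem_s18FW {E : 𝒲}
    (hE : ∀ (f : 𝒪) (d : Fin N →₀ ℕ), coeff d (E f) = (d.sum fun _ m => m) • coeff d f) :
    E ∈ s18FW k N 0 := by
  intro p f hf
  rw [mem_s18FO_iff] at hf ⊢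
  intro d hd
  rw [hE, hf d (by simpa using hd), smul_zero]

variable (k N) in
def IsSpecial (D : 𝒲) : Prop := (∃ m, D ∈ s18FW k N m) ∧ divergence D = 0

lemma IsSpecial.lie {D D' : 𝒲} (hD : IsSpecial k N D) (hD' : IsSpecial k N D') :
    IsSpecial k N ⁅D, D'⁆ := by
  obtain ⟨⟨m, hDm⟩, hdivD⟩ := hD
  obtain ⟨⟨m', hDm'⟩, hdivD'⟩ := hD'
  refine ⟨⟨m + m', lie_mem_s18FW hDm hDm'⟩, ?_⟩
  rw [divergence_lie hDm hDm', hdivD, hdivD', D.map_zero, D'.map_zero, sub_zero]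

lemma isSpecial_pderiv (i : Fin N) : IsSpecial k N (pderiv k i) :=
  ⟨⟨-1, pderiv_mem_s18FW i⟩, divergence_pderiv i⟩

theorem forall_isSpecial_lie_iff [CharZero k] (hN : N ≠ 0) {D E : 𝒲}
    (hD : ∃ m, D ∈ s18FW k N m) (hEX : ∀ i, E (X i) = X i) (hE : E ∈ s18FW k N 0) :
    (∀ A, IsSpecial k N A → IsSpecial k N ⁅D, A⁆) ↔ ∃ c : k, IsSpecial k N (D - c • E) := by
  obtain ⟨m, hDm⟩ := hD
  have hDE (c : k) : D - c • E ∈ s18FW k N (min m 0) :=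
    sub_mem (mem_s18FWSubmodule.mpr (s18FW_antitone (min_le_left _ _) hDm))
      (Submodule.smul_of_tower_mem _ c
        (mem_s18FWSubmodule.mpr (s18FW_antitone (min_le_right _ _) hE)))
  constructor
  · intro hnorm
    set c₀ := constantCoeff (divergence D)
    have hconst : divergence D = C c₀ := pderiv.ext
      (fun i => by
        rw [pderiv_divergence_eq_zero hDm (hnorm _ (isSpecial_pderiv i)).2, pderiv_C])
      (by simp [c₀])
    refine ⟨c₀ / N, ⟨_, hDE _⟩, ?_⟩
    rw [divergence_sub_smul, hconst, divergence_eq_natCast hEX, ← map_natCast C, smul_eq_C_mul,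
      ← map_mul, div_mul_cancel₀ _ (Nat.cast_ne_zero.mpr hN), sub_self]
  · rintro ⟨c, -, hc⟩ A ⟨⟨mA, hA⟩, hdivA⟩
    refine ⟨⟨m + mA, lie_mem_s18FW hDm hA⟩, ?_⟩
    rw [divergence_sub_smul, divergence_eq_natCast hEX, sub_eq_zero] at hc
    rw [divergence_lie hDm hA, hdivA, hc, D.map_zero, A.map_smul, A.map_natCast, smul_zero,
      sub_zero]

end FormalVectorField

open FormalVectorField

/-- `S_N = { D ∈ W_N : Div D = 0 }` is a Lie subalgebra of `W_N` (the
continuous derivations of `k[[t¹,…,t^N]]`), and the normalizer of `S_N` in `W_N` is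
`S_N ⊕ kE`, where `E` is the Euler vector field.  The divergence is
`Div D = ∑ᵢ ∂(D tⁱ)/∂tⁱ`, with the partial derivatives `∂/∂tⁱ` characterized
coefficientwise. -/
theorem stmt18 (k : Type*) [Field k] [CharZero k] (N : ℕ) (hN : 2 ≤ N)
    (pd : Fin N → (MvPowerSeries (Fin N) k →ₗ[k] MvPowerSeries (Fin N) k))
    (hpd : ∀ (i : Fin N) (f : MvPowerSeries (Fin N) k) (d : Fin N →₀ ℕ),
      MvPowerSeries.coeff d (pd i f)
        = (d i + 1) • MvPowerSeries.coeff (d + Finsupp.single i 1) f)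
    (E : Derivation k (MvPowerSeries (Fin N) k) (MvPowerSeries (Fin N) k))
    (hE : ∀ (f : MvPowerSeries (Fin N) k) (d : Fin N →₀ ℕ),
      MvPowerSeries.coeff d (E f) = (d.sum fun _ m => m) • MvPowerSeries.coeff d f) :
    letI Div : Derivation k (MvPowerSeries (Fin N) k) (MvPowerSeries (Fin N) k) →
        MvPowerSeries (Fin N) k :=
      fun D => ∑ i, pd i (D (MvPowerSeries.X i))
    letI Smem : Derivation k (MvPowerSeries (Fin N) k) (MvPowerSeries (Fin N) k) → Prop :=
      fun D => (∃ m : ℤ, D ∈ s18FW k N m) ∧ Div D = 0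
    (∀ D D', Smem D → Smem D' → Smem ⁅D, D'⁆) ∧
    (∀ D : Derivation k (MvPowerSeries (Fin N) k) (MvPowerSeries (Fin N) k),
      (∃ m : ℤ, D ∈ s18FW k N m) →
      ((∀ A, Smem A → Smem ⁅D, A⁆) ↔ ∃ c : k, Smem (D - c • E))) := by
  obtain rfl := eq_pderiv_of_forall_coeff hpd
  exact ⟨fun _ _ => IsSpecial.lie, fun _ hD =>
    forall_isSpecial_lie_iff (by omega) hD (euler_apply_X hE) (euler_mem_s18FW hE)⟩
end
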